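/- arXiv:1502.04915 — 4 statements merged into one kernel-verified Lean document; each statement's English description precedes it below -/
import Mathlib

section
/- Let b : ℝ → ℝ be defined by b(x) = x·log|x| for x ≠ 0 and b(0) = 0. Then there exists a constant C > 0 such that for every real number N > e and all x, y ∈ ℝ with |x| ≤ N and |y| ≤ N, one has |b(x) − b(y)| ≤ C·(log N)·|x − y| + C·(log N)/N. -/
/-! Write `b x = x log |x|` and let `|y| ≤ |x|`. Splitting
`b x - b y = (x - y) log |x| + y (log |x| - log |y|)` and using `log s ≤ s - 1` on the second
term gives `|b x - b y| ≤ (|log |x|| + 1) |x - y|`, so when `1 / N ≤ |x| ≤ N` the bound is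
Lipschitz with constant `log N + 1 ≤ 2 log N`. Otherwise both points lie in `[-1/N, 1/N]`, where
`|b| ≤ log N / N` because `s ↦ log s / s` decreases on `[e, ∞)`. -/

open Real

lemma abs_log_le_log_of_inv_le_of_le {N t : ℝ} (hN : 0 < N) (ht : N⁻¹ ≤ t) (htN : t ≤ N) :
    |log t| ≤ log N := by
  rw [abs_le, ← log_inv]
  exact ⟨log_le_log (inv_pos.mpr hN) ht,
    log_le_log ((inv_pos.mpr hN).trans_le ht) htN⟩

lemma abs_mul_log_abs_le_log_div {N x : ℝ} (hN : exp 1 ≤ N) (hx : |x| ≤ N⁻¹) :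
    abs (x * log |x|) ≤ log N / N := by
  have hN₁ : 1 ≤ N := (one_le_exp zero_le_one).trans hN
  rcases eq_or_ne x 0 with rfl | hx₀
  · simpa using div_nonneg (log_nonneg hN₁) (zero_le_one.trans hN₁)
  have hN₀ : 0 < N := zero_lt_one.trans_le hN₁
  have ht₀ : 0 < |x| := abs_pos.mpr hx₀
  have hNt : N ≤ |x|⁻¹ := (le_inv_comm₀ ht₀ hN₀).mp hx
  have hlog : log |x| ≤ 0 :=
    log_nonpos ht₀.le (hx.trans (inv_le_one_of_one_le₀ hN₁))
  calc abs (x * log |x|)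
      = log |x|⁻¹ / |x|⁻¹ := by
        rw [abs_mul, abs_of_nonpos hlog, log_inv, div_inv_eq_mul, mul_comm]
    _ ≤ log N / N := log_div_self_antitoneOn hN (hN.trans hNt) hNt

lemma abs_mul_log_abs_sub_le {x y : ℝ} (hyx : |y| ≤ |x|) :
    abs (x * log |x| - y * log |y|) ≤ (abs (log |x|) + 1) * |x - y| := by
  rcases eq_or_ne y 0 with rfl | hy₀
  · simp only [abs_zero, log_zero, mul_zero, sub_zero, abs_mul, mul_comm |x|]
    nlinarith [abs_nonneg x]
  have hy : 0 < |y| := abs_pos.mpr hy₀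
  have hx : 0 < |x| := hy.trans_le hyx
  have hlog : 0 ≤ log |x| - log |y| := sub_nonneg.mpr (log_le_log hy hyx)
  have hgap : |y| * (log |x| - log |y|) ≤ |x| - |y| := by
    have := log_le_sub_one_of_pos (div_pos hx hy)
    rw [log_div hx.ne' hy.ne'] at this
    calc |y| * (log |x| - log |y|) ≤ |y| * (|x| / |y| - 1) := by gcongr
      _ = |x| - |y| := by field_simp
  calc abs (x * log |x| - y * log |y|)
      = abs ((x - y) * log |x| + y * (log |x| - log |y|)) := by ring_nf
    _ ≤ |x - y| * abs (log |x|) + |y| * (log |x| - log |y|) := by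
        refine (abs_add_le _ _).trans_eq ?_
        rw [abs_mul, abs_mul, abs_of_nonneg hlog]
    _ ≤ |x - y| * abs (log |x|) + |x - y| := by linarith [abs_sub_abs_le_abs_sub x y]
    _ = (abs (log |x|) + 1) * |x - y| := by ring

/-- Verification of the drift inequality of hypothesis (H1) (with μ = 1) for the
drift coefficient `b x = x * log |x|` (with `b 0 = 0`, which holds automatically
since `Real.log 0 = 0`). -/
theorem drift_H1_xlogx :
    ∃ C : ℝ, 0 < C ∧
      ∀ N : ℝ, Real.exp 1 < N → ∀ x y : ℝ, |x| ≤ N → |y| ≤ N →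
        abs (x * Real.log |x| - y * Real.log |y|) ≤
          C * Real.log N * |x - y| + C * Real.log N / N := by
  refine ⟨2, two_pos, fun N hN x y hx hy => ?_⟩
  wlog hyx : |y| ≤ |x| generalizing x y
  · simpa only [abs_sub_comm] using this y x hy hx (le_of_not_ge hyx)
  have hN₀ : 0 < N := (exp_pos 1).trans hN
  have hlogN : 1 < log N := (lt_log_iff_exp_lt hN₀).mpr hN
  have hdiv : 0 ≤ log N / N := by positivity
  rcases le_or_gt N⁻¹ |x| with hxN | hxN
  · calc abs (x * log |x| - y * log |y|)
        ≤ (abs (log |x|) + 1) * |x - y| := abs_mul_log_abs_sub_le hyx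
      _ ≤ (log N + log N) * |x - y| := by
          gcongr
          exact abs_log_le_log_of_inv_le_of_le hN₀ hxN hx
      _ ≤ 2 * log N * |x - y| + 2 * log N / N := by rw [mul_div_assoc]; nlinarith
  · calc abs (x * log |x| - y * log |y|)
        ≤ abs (x * log |x|) + abs (y * log |y|) := abs_sub _ _
      _ ≤ log N / N + log N / N :=
          add_le_add (abs_mul_log_abs_le_log_div hN.le hxN.le)
            (abs_mul_log_abs_le_log_div hN.le (hyx.trans hxN.le))
      _ ≤ 2 * log N * |x - y| + 2 * log N / N := by
          rw [mul_div_assoc]; nlinarith [abs_nonneg (x - y)]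
end

section
/- Let σ : ℝ^d → ℝ^{d×m} and b : ℝ^d → ℝ^d be continuous maps and C > 0 a constant such that for all x, y ∈ ℝ^d with 0 < |x − y| < 1 one has ‖σ(x) − σ(y)‖ ≤ C·|x − y|·√(log(1/|x − y|)) and |b(x) − b(y)| ≤ C·|x − y|·log(1/|x − y|). Then there exists a constant C' > 0 such that for every integer N > e and all x, y ∈ ℝ^d with |x| ≤ N, |y| ≤ N and |x − y| < 1, one has ‖σ(x) − σ(y)‖ ≤ C'·(√(log N)·|x − y| + (log N)/N) and |b(x) − b(y)| ≤ C'·((log N)·|x − y| + (log N)/N). -/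
/-- The Hilbert–Schmidt (Frobenius) norm of a real `d × m` matrix. -/
noncomputable def frobNorm {d m : ℕ} (A : Matrix (Fin d) (Fin m) ℝ) : ℝ :=
  Real.sqrt (∑ i, ∑ j, (A i j) ^ 2)

/-- The Fang–Zhang pathwise-uniqueness conditions imply the inequalities of
hypothesis (H1) with μ = 1: if `‖σ x - σ y‖ ≤ C |x-y| √(log (1/|x-y|))` and
`|b x - b y| ≤ C |x-y| log (1/|x-y|)` for `0 < |x-y| < 1`, then there is `C' > 0`
such that for every integer `N > e` and all `x, y` with `|x| ≤ N`, `|y| ≤ N`,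
`|x - y| < 1`, the (H1)-type inequalities hold. -/
theorem fang_zhang_implies_H1 (d m : ℕ)
    (σ : EuclideanSpace ℝ (Fin d) → Matrix (Fin d) (Fin m) ℝ)
    (b : EuclideanSpace ℝ (Fin d) → EuclideanSpace ℝ (Fin d))
    (hσc : Continuous σ) (hbc : Continuous b)
    (C : ℝ) (hC : 0 < C)
    (hσ : ∀ x y : EuclideanSpace ℝ (Fin d), 0 < ‖x - y‖ → ‖x - y‖ < 1 →
      frobNorm (σ x - σ y) ≤ C * ‖x - y‖ * Real.sqrt (Real.log (1 / ‖x - y‖)))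
    (hb : ∀ x y : EuclideanSpace ℝ (Fin d), 0 < ‖x - y‖ → ‖x - y‖ < 1 →
      ‖b x - b y‖ ≤ C * ‖x - y‖ * Real.log (1 / ‖x - y‖)) :
    ∃ C' : ℝ, 0 < C' ∧
      ∀ N : ℤ, Real.exp 1 < (N : ℝ) →
        ∀ x y : EuclideanSpace ℝ (Fin d), ‖x‖ ≤ (N : ℝ) → ‖y‖ ≤ (N : ℝ) → ‖x - y‖ < 1 →
          frobNorm (σ x - σ y) ≤
              C' * (Real.sqrt (Real.log (N : ℝ)) * ‖x - y‖ + Real.log (N : ℝ) / (N : ℝ)) ∧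
            ‖b x - b y‖ ≤
              C' * (Real.log (N : ℝ) * ‖x - y‖ + Real.log (N : ℝ) / (N : ℝ)) := by
  refine ⟨C, hC, ?_⟩
  intro N hN x y hx hy hxy
  have hNpos : (0:ℝ) < N := lt_trans (Real.exp_pos 1) hN
  have hlogN : 1 < Real.log N := by
    have := Real.log_lt_log (Real.exp_pos 1) hN
    rwa [Real.log_exp] at this
  have hlogN0 : (0:ℝ) ≤ Real.log N := by linarith
  set r := ‖x - y‖ with hr
  have hr0 : 0 ≤ r := norm_nonneg _
  rcases eq_or_lt_of_le hr0 with h0 | hrpos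
  · -- r = 0, so x = y
    have hxy0 : x = y := by
      have : x - y = 0 := by
        rw [← norm_eq_zero]; exact h0.symm
      exact sub_eq_zero.mp this
    subst hxy0
    have h1 : frobNorm (σ x - σ x) = 0 := by
      simp [frobNorm]
    have h2 : ‖b x - b x‖ = 0 := by simp
    have hrhs : (0:ℝ) ≤ Real.log N / N := div_nonneg hlogN0 hNpos.le
    constructor
    · rw [h1]
      have : (0:ℝ) ≤ Real.sqrt (Real.log N) * r := by positivity
      nlinarith
    · rw [h2]
      have : (0:ℝ) ≤ Real.log N * r := by positivity
      nlinarith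
  · -- 0 < r
    have hr1 : r < 1 := hxy
    have hlog1r : 0 ≤ Real.log (1 / r) := by
      apply Real.log_nonneg
      rw [le_div_iff₀ hrpos]; linarith
    rcases le_or_gt (1 / (N:ℝ)) r with hcase | hcase
    · -- 1/N ≤ r : log(1/r) ≤ log N
      have h1r : 1 / r ≤ N := by
        rw [div_le_iff₀ hrpos]
        calc (1:ℝ) = (N:ℝ) * (1/N) := by field_simp
        _ ≤ (N:ℝ) * r := by
            apply mul_le_mul_of_nonneg_left hcase hNpos.le
      have hloglog : Real.log (1/r) ≤ Real.log N :=
        Real.log_le_log (by positivity) h1r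
      have hrhs : (0:ℝ) ≤ C * (Real.log N / N) := by positivity
      constructor
      · calc frobNorm (σ x - σ y) ≤ C * r * Real.sqrt (Real.log (1/r)) :=
              hσ x y hrpos hr1
          _ ≤ C * r * Real.sqrt (Real.log N) := by
              apply mul_le_mul_of_nonneg_left (Real.sqrt_le_sqrt hloglog)
              positivity
          _ = C * (Real.sqrt (Real.log N) * r) := by ring
          _ ≤ C * (Real.sqrt (Real.log N) * r + Real.log N / N) := by nlinarith
      · calc ‖b x - b y‖ ≤ C * r * Real.log (1/r) := hb x y hrpos hr1
          _ ≤ C * r * Real.log N := by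
              apply mul_le_mul_of_nonneg_left hloglog; positivity
          _ = C * (Real.log N * r) := by ring
          _ ≤ C * (Real.log N * r + Real.log N / N) := by nlinarith
    · -- r < 1/N : use antitonicity of log s / s
      have hs : (N:ℝ) ≤ 1 / r := by
        rw [le_div_iff₀ hrpos]
        have h1 : (N:ℝ) * r < (N:ℝ) * (1/N) := mul_lt_mul_of_pos_left hcase hNpos
        have h2 : (N:ℝ) * (1/N) = 1 := by field_simp
        linarith
      have hmem1 : (N:ℝ) ∈ {x : ℝ | Real.exp 1 ≤ x} := le_of_lt hN
      have hmem2 : (1/r) ∈ {x : ℝ | Real.exp 1 ≤ x} := le_trans hN.le hs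
      have hanti : Real.log (1/r) / (1/r) ≤ Real.log N / N :=
        Real.log_div_self_antitoneOn hmem1 hmem2 hs
      have hkey : r * Real.log (1/r) ≤ Real.log N / N := by
        have heq : Real.log (1/r) / (1/r) = r * Real.log (1/r) := by
          field_simp
        rw [heq] at hanti; exact hanti
      have hlog1r1 : 1 ≤ Real.log (1/r) := by
        calc (1:ℝ) ≤ Real.log N := hlogN.le
          _ ≤ Real.log (1/r) := Real.log_le_log hNpos hs
      have h1s : 1 ≤ Real.sqrt (Real.log (1/r)) := by
        have := Real.sqrt_le_sqrt hlog1r1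
        rwa [Real.sqrt_one] at this
      have hsq := Real.mul_self_sqrt (le_trans zero_le_one hlog1r1)
      have hsqrtle : Real.sqrt (Real.log (1/r)) ≤ Real.log (1/r) := by nlinarith
      have hterm1 : (0:ℝ) ≤ C * (Real.sqrt (Real.log N) * r) := by positivity
      have hterm2 : (0:ℝ) ≤ C * (Real.log N * r) := by positivity
      constructor
      · calc frobNorm (σ x - σ y) ≤ C * r * Real.sqrt (Real.log (1/r)) :=
              hσ x y hrpos hr1
          _ ≤ C * r * Real.log (1/r) := by
              apply mul_le_mul_of_nonneg_left hsqrtle; positivity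
          _ = C * (r * Real.log (1/r)) := by ring
          _ ≤ C * (Real.log N / N) := by
              apply mul_le_mul_of_nonneg_left hkey hC.le
          _ ≤ C * (Real.sqrt (Real.log N) * r + Real.log N / N) := by nlinarith
      · calc ‖b x - b y‖ ≤ C * r * Real.log (1/r) := hb x y hrpos hr1
          _ = C * (r * Real.log (1/r)) := by ring
          _ ≤ C * (Real.log N / N) := by
              apply mul_le_mul_of_nonneg_left hkey hC.le
          _ ≤ C * (Real.log N * r + Real.log N / N) := by nlinarith
end

section
/- Define σ : ℝ → ℝ by σ(x) = x·√|log|x|| for x ≠ 0 and σ(0) = 0. Then there do not exist a constant C > 0 and a function r : ℝ → ℝ such that for all x, y ∈ ℝ with |x − y| ≤ 1 one has |σ(x) − σ(y)| ≤ C·|x − y|·r(|x − y|²). -/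
/-- The diffusion coefficient `σ x = x * √|log |x||` (with `σ 0 = 0`, automatic in Lean
since `Real.log 0 = 0`) is not covered by Fang–Zhang type conditions: there are no
constant `C > 0` and function `r` such that `|σ x - σ y| ≤ C * |x - y| * r (|x - y|²)`
whenever `|x - y| ≤ 1`. -/
theorem diffusion_not_fang_zhang :
    ¬ ∃ (C : ℝ) (r : ℝ → ℝ), 0 < C ∧
      ∀ x y : ℝ, |x - y| ≤ 1 →
        abs (x * Real.sqrt (abs (Real.log |x|)) - y * Real.sqrt (abs (Real.log |y|))) ≤
          C * |x - y| * r (|x - y| ^ 2) := by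
  rintro ⟨C, r, hC, h⟩
  set K : ℝ := max (C * r 1) 0 with hK
  set x : ℝ := Real.exp ((K + 1) ^ 2) with hx
  have hx1 : (1 : ℝ) ≤ x := Real.one_le_exp (by positivity)
  have hx0 : (0 : ℝ) < x := lt_of_lt_of_le one_pos hx1
  have hlogx : Real.log x = (K + 1) ^ 2 := Real.log_exp _
  have hK0 : 0 ≤ K := le_max_right _ _
  have hlogx0 : 0 ≤ Real.log x := by rw [hlogx]; positivity
  have hlogx1 : 0 ≤ Real.log (x + 1) :=
    Real.log_nonneg (by linarith)
  have hsx : Real.sqrt (abs (Real.log x)) = K + 1 := by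
    rw [abs_of_nonneg hlogx0, hlogx]
    exact Real.sqrt_sq (by positivity)
  have hsx1 : K + 1 ≤ Real.sqrt (abs (Real.log (x + 1))) := by
    rw [abs_of_nonneg hlogx1]
    calc K + 1 = Real.sqrt (Real.log x) := by
          rw [hlogx, Real.sqrt_sq (by positivity)]
      _ ≤ Real.sqrt (Real.log (x + 1)) := by
          apply Real.sqrt_le_sqrt
          exact Real.log_le_log hx0 (by linarith)
  have hdist : |(x + 1) - x| = 1 := by norm_num
  have hb := h (x + 1) x (le_of_eq hdist)
  rw [hdist] at hb
  norm_num at hb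
  have hlow : K + 1 ≤ (x + 1) * Real.sqrt (abs (Real.log (x + 1)))
      - x * Real.sqrt (abs (Real.log x)) := by
    rw [hsx]
    have h1 : (x + 1) * (K + 1) ≤ (x + 1) * Real.sqrt (abs (Real.log (x + 1))) := by
      apply mul_le_mul_of_nonneg_left hsx1 (by linarith)
    nlinarith
  have habs : K + 1 ≤ |(x + 1) * Real.sqrt (abs (Real.log (x + 1)))
      - x * Real.sqrt (abs (Real.log x))| := le_trans hlow (le_abs_self _)
  have : K + 1 ≤ C * r 1 := le_trans habs hb
  have : C * r 1 ≤ K := le_max_left _ _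
  linarith
end

section
/- Let σ : ℝ^d → ℝ^{d×m} and b : ℝ^d → ℝ^d be continuous, bounded, and satisfy hypothesis (H1). Let T > 0, x ∈ ℝ^d, and let g : [0,T] → ℝ^m be measurable with ∫₀^T |g(s)|² ds < ∞. Then there exists exactly one continuous function X : [0,T] → ℝ^d such that X(t) = x + ∫₀^t (σ(X(s))·g(s) + b(X(s))) ds for all t ∈ [0,T]. -/
/-!
Write `V z s = σ(z) g(s) + b(z)` and `κ = (M + 1)(|g| + 1)`, integrable on `[0, T]`. Picard
iterates, their limits and solutions all stay in the ball of radius `R = |x| + ∫₀ᵀ κ`, and there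
(H1) gives, for every `N > e` with `N ≥ R`, a `κ`-weighted Lipschitz bound up to an additive error:
`|V z s - V w s| ≤ κ(s) (L_N |z - w| + ε_N)` with `L_N = C log N` and `ε_N = C log N / N^μ`.

A doubling argument turns `φ ≤ a + L ∫ κ φ` into the Gronwall bound `φ ≤ a e^{2 L ∫ κ + 1}`.
On a block with `∫ κ ≤ Q = μ / (4C)` this reads `φ ≤ e (∫ κ) C log N / N^{μ/2}`, which tends to
`0` as `N → ∞`; so a nonnegative `φ` obeying these inequalities vanishes, block after block.
For `φ = |X₁ - X₂|` this is uniqueness. For `φ` the limit of the tail diameters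
`sup_{p,q} |X_{n+p} - X_{n+q}|` of the Picard iterates it shows that the iterates converge, and
by dominated convergence their limit solves the equation.
-/

/-- Matrix–vector multiplication, with Euclidean norms on the vector spaces. -/
noncomputable def mulVecE {d m : ℕ} (A : Matrix (Fin d) (Fin m) ℝ)
    (v : EuclideanSpace ℝ (Fin m)) : EuclideanSpace ℝ (Fin d) :=
  WithLp.toLp 2 (fun i => ∑ j, A i j * v j)

/-- Hypothesis (H1): there are `C > 0` and `μ > 0` (given here as parameters) such that
for every real `N > e` and all `x, y` with `|x| ≤ N`, `|y| ≤ N`,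
`‖σ x - σ y‖ ≤ C √(log N) |x - y| + C (log N) / N ^ μ` and
`|b x - b y| ≤ C (log N) |x - y| + C (log N) / N ^ μ`. -/
def HypH1 {d m : ℕ} (σ : EuclideanSpace ℝ (Fin d) → Matrix (Fin d) (Fin m) ℝ)
    (b : EuclideanSpace ℝ (Fin d) → EuclideanSpace ℝ (Fin d)) (C μ : ℝ) : Prop :=
  ∀ N : ℝ, Real.exp 1 < N → ∀ x y : EuclideanSpace ℝ (Fin d),
    ‖x‖ ≤ N → ‖y‖ ≤ N →
      frobNorm (σ x - σ y) ≤ C * Real.sqrt (Real.log N) * ‖x - y‖ +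
        C * Real.log N / N ^ μ ∧
      ‖b x - b y‖ ≤ C * Real.log N * ‖x - y‖ + C * Real.log N / N ^ μ


open MeasureTheory Set Filter Topology

theorem IntervalIntegrable.mono_Icc {E : Type*} [NormedAddCommGroup E] {f : ℝ → E}
    {μ : Measure ℝ} {a b c d : ℝ} (hf : IntervalIntegrable f μ a b) (hc : c ∈ Icc a b)
    (hd : d ∈ Icc a b) : IntervalIntegrable f μ c d :=
  hf.mono_set (uIcc_subset_uIcc (Icc_subset_uIcc hc) (Icc_subset_uIcc hd))

theorem IntervalIntegrable.mul_of_norm_le {κ φ : ℝ → ℝ} {a b B : ℝ} (hab : a ≤ b)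
    (hκ : IntervalIntegrable κ volume a b)
    (hφ : AEStronglyMeasurable φ (volume.restrict (Icc a b))) (hB : ∀ s ∈ Icc a b, ‖φ s‖ ≤ B) :
    IntervalIntegrable (fun s => κ s * φ s) volume a b := by
  rw [intervalIntegrable_iff_integrableOn_Icc_of_le hab] at hκ ⊢
  exact (hκ.bdd_mul hφ ((ae_restrict_iff' measurableSet_Icc).2 (ae_of_all _ hB))).congr
    (ae_of_all _ fun s => mul_comm _ _)

theorem IntervalIntegrable.continuousOn_primitive_Icc {k : ℝ → ℝ} {u v t : ℝ}
    (hk : IntervalIntegrable k volume u v) (ht : t ∈ Icc u v) :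
    ContinuousOn (fun r => ∫ s in u..r, k s) (Icc u t) :=
  (intervalIntegral.continuousOn_primitive_interval' hk left_mem_uIcc).mono
    (by rw [uIcc_of_le (ht.1.trans ht.2)]; exact Icc_subset_Icc_right ht.2)

theorem exists_mem_Icc_le_and_sub_le {K : ℝ → ℝ} {u t c d : ℝ} (hut : u ≤ t)
    (hK : ContinuousOn K (Icc u t)) (hd : 0 ≤ d) (hKu : K u ≤ c) (hKt : K t ≤ c + d) :
    ∃ w ∈ Icc u t, K w ≤ c ∧ K t - K w ≤ d := by
  by_cases htc : K t ≤ c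
  · exact ⟨t, right_mem_Icc.2 hut, htc, by simpa using hd⟩
  · obtain ⟨w, hw, hKw⟩ := intermediate_value_Icc hut hK ⟨hKu, (not_le.1 htc).le⟩
    exact ⟨w, hw, hKw.le, by linarith⟩

section Gronwall

variable {k h : ℝ → ℝ} {u v a : ℝ}

theorem add_integral_le_two_pow_mul (hk0 : ∀ s, 0 ≤ k s)
    (hk : IntervalIntegrable k volume u v)
    (hkh : IntervalIntegrable (fun s => k s * h s) volume u v) (hh0 : ∀ s, 0 ≤ h s)
    (hle : ∀ t ∈ Icc u v, h t ≤ a + ∫ s in u..t, k s * h s) (n : ℕ) :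
    ∀ t ∈ Icc u v, ∫ s in u..t, k s ≤ n / 2 → a + ∫ s in u..t, k s * h s ≤ 2 ^ n * a := by
  set Φ := fun t => a + ∫ s in u..t, k s * h s with hΦ
  have hΦ_sub : ∀ w ∈ Icc u v, ∀ t ∈ Icc u v, Φ t - Φ w = ∫ s in w..t, k s * h s :=
    fun w hw t ht => by
      have hu : u ∈ Icc u v := left_mem_Icc.2 (hw.1.trans hw.2)
      rw [← intervalIntegral.integral_interval_sub_left (hkh.mono_Icc hu ht) (hkh.mono_Icc hu hw)]
      ring
  have hΦ_mono : ∀ w ∈ Icc u v, ∀ t ∈ Icc u v, w ≤ t → Φ w ≤ Φ t := fun w hw t ht hwt => by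
    have : 0 ≤ ∫ s in w..t, k s * h s :=
      intervalIntegral.integral_nonneg hwt fun s _ => mul_nonneg (hk0 s) (hh0 s)
    linarith [hΦ_sub w hw t ht]
  -- On `[w, t]` we have `h ≤ Φ ≤ Φ t`, so `Φ` at most doubles where `∫ k ≤ 1 / 2`.
  have hΦ_step : ∀ w ∈ Icc u v, ∀ t ∈ Icc u v, w ≤ t →
      Φ t - Φ w ≤ Φ t * ∫ s in w..t, k s := fun w hw t ht hwt => by
    rw [hΦ_sub w hw t ht, mul_comm, ← intervalIntegral.integral_mul_const]
    refine intervalIntegral.integral_mono_on hwt (hkh.mono_Icc hw ht)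
      ((hk.mono_Icc hw ht).mul_const _) fun s hs => ?_
    have hs' : s ∈ Icc u v := ⟨hw.1.trans hs.1, hs.2.trans ht.2⟩
    exact mul_le_mul_of_nonneg_left ((hle s hs').trans (hΦ_mono s hs' t ht hs.2)) (hk0 s)
  intro t ht hKt
  have hu : u ∈ Icc u v := ⟨le_rfl, ht.1.trans ht.2⟩
  have hΦt : 0 ≤ Φ t := (hh0 t).trans (hle t ht)
  induction n generalizing t with
  | zero =>
    have := hΦ_step u hu t ht ht.1
    simp only [hΦ, intervalIntegral.integral_same, add_zero] at this ⊢
    nlinarith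
  | succ n ih =>
    obtain ⟨w, hw, hKw, hKwt⟩ := exists_mem_Icc_le_and_sub_le (c := n / 2) ht.1
      (hk.continuousOn_primitive_Icc ht) (by norm_num : (0:ℝ) ≤ 1 / 2) (by simp; positivity)
      (by push_cast at hKt; linarith)
    have hw' : w ∈ Icc u v := ⟨hw.1, hw.2.trans ht.2⟩
    have hstep := hΦ_step w hw' t ht hw.2
    rw [← intervalIntegral.integral_interval_sub_left (hk.mono_Icc hu ht) (hk.mono_Icc hu hw')]
      at hstep
    have hΦw := ih w hw' hKw ((hh0 w).trans (hle w hw'))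
    rw [pow_succ]
    nlinarith

theorem le_mul_exp_of_le_add_integral (hk0 : ∀ s, 0 ≤ k s)
    (hk : IntervalIntegrable k volume u v)
    (hkh : IntervalIntegrable (fun s => k s * h s) volume u v) (hh0 : ∀ s, 0 ≤ h s)
    (hle : ∀ t ∈ Icc u v, h t ≤ a + ∫ s in u..t, k s * h s) :
    ∀ t ∈ Icc u v, h t ≤ a * Real.exp (2 * (∫ s in u..t, k s) + 1) := by
  intro t ht
  have ha : 0 ≤ a := by simpa using (hh0 u).trans (hle u ⟨le_rfl, ht.1.trans ht.2⟩)
  have hK0 : 0 ≤ 2 * ∫ s in u..t, k s :=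
    mul_nonneg zero_le_two (intervalIntegral.integral_nonneg ht.1 fun s _ => hk0 s)
  set n := ⌈2 * ∫ s in u..t, k s⌉₊
  have h2n : (2:ℝ) ^ n ≤ Real.exp (2 * (∫ s in u..t, k s) + 1) :=
    calc (2:ℝ) ^ n ≤ Real.exp 1 ^ n :=
          pow_le_pow_left₀ zero_le_two (by linarith [Real.add_one_le_exp 1]) n
      _ = Real.exp n := Real.exp_one_pow n
      _ ≤ _ := Real.exp_le_exp.2 (Nat.ceil_lt_add_one hK0).le
  calc h t ≤ a + ∫ s in u..t, k s * h s := hle t ht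
    _ ≤ 2 ^ n * a := add_integral_le_two_pow_mul hk0 hk hkh hh0 hle n t ht
        (by rw [le_div_iff₀ two_pos, mul_comm]; exact Nat.le_ceil _)
    _ ≤ a * Real.exp (2 * (∫ s in u..t, k s) + 1) := by
        rw [mul_comm]; exact mul_le_mul_of_nonneg_left h2n ha

end Gronwall

section Vanishing

variable {φ κ : ℝ → ℝ} {T Q : ℝ} {ι : Type*} {l : Filter ι} [l.NeBot] {L a : ι → ℝ}

theorem eqOn_zero_Icc_of_integral_le (hκ0 : ∀ s, 0 ≤ κ s)
    (hκ : IntervalIntegrable κ volume 0 T)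
    (hκφ : IntervalIntegrable (fun s => κ s * φ s) volume 0 T) (hφ0 : ∀ s, 0 ≤ φ s)
    (hle : ∀ᶠ j in l, 0 ≤ L j ∧ ∀ t ∈ Icc 0 T, φ t ≤ a j + L j * ∫ s in 0..t, κ s * φ s)
    (hsmall : Tendsto (fun j => a j * Real.exp (2 * L j * Q)) l (𝓝 0)) {t₀ t₁ : ℝ}
    (h₀ : t₀ ∈ Icc 0 T) (h₁ : t₁ ∈ Icc 0 T) (hφt₀ : ∫ s in 0..t₀, κ s * φ s = 0)
    (hQ : ∫ s in t₀..t₁, κ s ≤ Q) : EqOn φ 0 (Icc t₀ t₁) := by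
  intro t ht
  refine le_antisymm (ge_of_tendsto (by simpa using hsmall.mul_const (Real.exp 1)) ?_) (hφ0 t)
  filter_upwards [hle] with j ⟨hL, hj⟩
  have h0 : (0:ℝ) ∈ Icc 0 T := ⟨le_rfl, h₀.1.trans h₀.2⟩
  have ha : 0 ≤ a j := by simpa using (hφ0 0).trans (hj 0 h0)
  -- Since `∫₀^{t₀} κ φ = 0`, Gronwall's inequality applies on `[t₀, t₁]` alone.
  have hgron := le_mul_exp_of_le_add_integral (k := fun s => L j * κ s) (h := φ) (a := a j)
    (fun s => mul_nonneg hL (hκ0 s)) ((hκ.mono_Icc h₀ h₁).const_mul _)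
    (by simpa only [mul_assoc] using (hκφ.mono_Icc h₀ h₁).const_mul (L j)) hφ0
    (fun r hr => by
      have hrT : r ∈ Icc 0 T := ⟨h₀.1.trans hr.1, hr.2.trans h₁.2⟩
      have := hj r hrT
      calc φ r ≤ a j + L j * ∫ s in t₀..r, κ s * φ s := by
            rwa [← intervalIntegral.integral_add_adjacent_intervals (hκφ.mono_Icc h0 h₀)
              (hκφ.mono_Icc h₀ hrT), hφt₀, zero_add] at this
        _ = a j + ∫ s in t₀..r, L j * κ s * φ s := by
            simp only [mul_assoc, intervalIntegral.integral_const_mul]) t ht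
  have hKt : ∫ s in t₀..t, κ s ≤ Q :=
    (intervalIntegral.integral_mono_interval le_rfl ht.1 ht.2
      (ae_of_all _ fun s => hκ0 s) (hκ.mono_Icc h₀ h₁)).trans hQ
  calc φ t ≤ a j * Real.exp (2 * (∫ s in t₀..t, L j * κ s) + 1) := hgron
    _ ≤ a j * Real.exp (2 * L j * Q + 1) := by
      rw [intervalIntegral.integral_const_mul]
      have := mul_le_mul_of_nonneg_left hKt hL
      gcongr _ * Real.exp ?_
      linarith
    _ = a j * Real.exp (2 * L j * Q) * Real.exp 1 := by rw [Real.exp_add]; ring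

theorem eqOn_zero_of_le_add_integral (hκ0 : ∀ s, 0 ≤ κ s)
    (hκ : IntervalIntegrable κ volume 0 T)
    (hκφ : IntervalIntegrable (fun s => κ s * φ s) volume 0 T) (hφ0 : ∀ s, 0 ≤ φ s)
    (hQ : 0 < Q)
    (hle : ∀ᶠ j in l, 0 ≤ L j ∧ ∀ t ∈ Icc 0 T, φ t ≤ a j + L j * ∫ s in 0..t, κ s * φ s)
    (hsmall : Tendsto (fun j => a j * Real.exp (2 * L j * Q)) l (𝓝 0)) :
    EqOn φ 0 (Icc 0 T) := by
  set K := fun t => ∫ s in 0..t, κ s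
  have hsteps : ∀ n : ℕ, ∀ t ∈ Icc 0 T, K t ≤ n * Q → EqOn φ 0 (Icc 0 t) := by
    intro n
    induction n with
    | zero =>
      intro t ht hKt
      exact eqOn_zero_Icc_of_integral_le hκ0 hκ hκφ hφ0 hle hsmall ⟨le_rfl, ht.1.trans ht.2⟩
        ht intervalIntegral.integral_same
        (by simp only [K, CharP.cast_eq_zero, zero_mul] at hKt; linarith)
    | succ n ih =>
      intro t ht hKt
      obtain ⟨w, hw, hKw, hKwt⟩ := exists_mem_Icc_le_and_sub_le (c := n * Q) ht.1
        (hκ.continuousOn_primitive_Icc ht) hQ.le (by simp; positivity)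
        (by push_cast at hKt; linarith)
      have hwT : w ∈ Icc 0 T := ⟨hw.1, hw.2.trans ht.2⟩
      have h0 : (0:ℝ) ∈ Icc 0 T := ⟨le_rfl, hwT.1.trans hwT.2⟩
      have hφw := ih w hwT hKw
      have hφ_int : ∫ s in 0..w, κ s * φ s = 0 := by
        rw [intervalIntegral.integral_congr (g := fun _ => 0) fun s hs => by
          rw [uIcc_of_le hw.1] at hs; simp [hφw hs]]
        simp
      rw [← Icc_union_Icc_eq_Icc hw.1 hw.2]
      refine hφw.union
        (eqOn_zero_Icc_of_integral_le hκ0 hκ hκφ hφ0 hle hsmall hwT ht hφ_int ?_)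
      rwa [← intervalIntegral.integral_interval_sub_left (hκ.mono_Icc h0 ht)
        (hκ.mono_Icc h0 hwT)]
  intro t ht
  obtain ⟨n, hn⟩ := exists_nat_ge (K T / Q)
  exact hsteps n T ⟨ht.1.trans ht.2, le_rfl⟩ (by rwa [div_le_iff₀ hQ] at hn) ht

end Vanishing

theorem iInf_le_add_integral {κ : ℝ → ℝ} {T a L B : ℝ} {ψ : ℕ → ℝ → ℝ}
    (hκ0 : ∀ s, 0 ≤ κ s) (hκ : IntervalIntegrable κ volume 0 T)
    (hψm : ∀ n, AEStronglyMeasurable (ψ n) (volume.restrict (Icc 0 T)))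
    (hψ0 : ∀ n s, 0 ≤ ψ n s) (hψB : ∀ n, ∀ s ∈ Icc 0 T, ψ n s ≤ B)
    (hψ_succ : ∀ n, ∀ s ∈ Icc 0 T, ψ (n + 1) s ≤ ψ n s)
    (hrec : ∀ n, ∀ t ∈ Icc 0 T, ψ (n + 1) t ≤ a + L * ∫ s in 0..t, κ s * ψ n s) :
    ∀ t ∈ Icc 0 T, ⨅ n, ψ n t ≤ a + L * ∫ s in 0..t, κ s * ⨅ n, ψ n s := by
  intro t ht
  have hbdd : ∀ s, BddBelow (range fun n => ψ n s) := fun s =>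
    ⟨0, by rintro _ ⟨n, rfl⟩; exact hψ0 n s⟩
  have h0 : (0:ℝ) ∈ Icc 0 T := ⟨le_rfl, ht.1.trans ht.2⟩
  have hsub : uIoc 0 t ⊆ Icc 0 T := uIoc_subset_uIcc.trans (uIcc_subset_Icc h0 ht)
  have hκt := hκ.mono_Icc h0 ht
  have hint : Tendsto (fun n => ∫ s in 0..t, κ s * ψ n s) atTop
      (𝓝 (∫ s in 0..t, κ s * ⨅ n, ψ n s)) := by
    refine intervalIntegral.tendsto_integral_filter_of_dominated_convergence (fun s => κ s * B)
      (Eventually.of_forall fun n => ?_)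
      (Eventually.of_forall fun n => ae_of_all _ fun s hs => ?_)
      (hκt.mul_const B) (ae_of_all _ fun s hs => ?_)
    · exact hκt.def'.aestronglyMeasurable.mul
        ((hψm n).mono_measure (Measure.restrict_mono hsub le_rfl))
    · rw [Real.norm_eq_abs, abs_of_nonneg (mul_nonneg (hκ0 s) (hψ0 n s))]
      exact mul_le_mul_of_nonneg_left (hψB n s (hsub hs)) (hκ0 s)
    · exact (tendsto_atTop_ciInf (antitone_nat_of_succ_le fun n => hψ_succ n s (hsub hs))
        (hbdd s)).const_mul (κ s)
  exact ge_of_tendsto (tendsto_const_nhds.add (hint.const_mul L))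
    (Eventually.of_forall fun n => (ciInf_le (hbdd t) (n + 1)).trans (hrec n t ht))

section TailDiam

variable {α : Type*} [PseudoMetricSpace α] {u : ℕ → α} {r : ℝ} {n : ℕ}

/-- This is `0`, not `∞`, when the tail `{u m | n ≤ m}` is unbounded. -/
noncomputable def tailDiam (u : ℕ → α) (n : ℕ) : ℝ :=
  ⨆ p : ℕ × ℕ, dist (u (n + p.1)) (u (n + p.2))

theorem tailDiam_nonneg : 0 ≤ tailDiam u n :=
  Real.iSup_nonneg fun _ => dist_nonneg

theorem dist_le_tailDiam (hu : ∀ m k, dist (u m) (u k) ≤ r) (p q : ℕ) :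
    dist (u (n + p)) (u (n + q)) ≤ tailDiam u n :=
  le_ciSup (f := fun p : ℕ × ℕ => dist (u (n + p.1)) (u (n + p.2)))
    ⟨r, by rintro _ ⟨p, rfl⟩; exact hu _ _⟩ (p, q)

theorem tailDiam_le (hu : ∀ m k, dist (u m) (u k) ≤ r) : tailDiam u n ≤ r :=
  ciSup_le fun _ => hu _ _

theorem tailDiam_succ_le (hu : ∀ m k, dist (u m) (u k) ≤ r) :
    tailDiam u (n + 1) ≤ tailDiam u n :=
  ciSup_le fun p => by
    simpa only [add_assoc, add_comm 1] using dist_le_tailDiam (n := n) hu (1 + p.1) (1 + p.2)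

theorem cauchySeq_of_tendsto_tailDiam (hu : ∀ m k, dist (u m) (u k) ≤ r)
    (h : Tendsto (tailDiam u) atTop (𝓝 0)) : CauchySeq u :=
  cauchySeq_of_le_tendsto_0 (tailDiam u) (fun m k N hm hk => by
    simpa only [Nat.add_sub_cancel' hm, Nat.add_sub_cancel' hk] using
      dist_le_tailDiam (n := N) hu (m - N) (k - N)) h

theorem aemeasurable_tailDiam {β : Type*} [MeasurableSpace β] {μ : Measure β}
    {F : ℕ → β → α} (hF : ∀ m k, AEMeasurable (fun b => dist (F m b) (F k b)) μ) :
    AEMeasurable (fun b => tailDiam (fun m => F m b) n) μ :=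
  AEMeasurable.iSup fun _ => hF _ _

end TailDiam

section IntegralEquation

variable {E : Type*} [NormedAddCommGroup E] {V : E → ℝ → E} {κ : ℝ → ℝ} {T R : ℝ} {x : E}
  {f f₁ f₂ : ℝ → E}

structure IsDominatedCaratheodory (V : E → ℝ → E) (κ : ℝ → ℝ) (T : ℝ) : Prop where
  continuous_state : ∀ s, Continuous fun z => V z s
  aestronglyMeasurable_comp : ∀ f : ℝ → E, ContinuousOn f (Icc 0 T) →
    AEStronglyMeasurable (fun s => V (f s) s) (volume.restrict (Icc 0 T))
  norm_le : ∀ z s, ‖V z s‖ ≤ κ s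
  intervalIntegrable : IntervalIntegrable κ volume 0 T

def IsLipschitzUpTo (V : E → ℝ → E) (κ : ℝ → ℝ) (R L ε : ℝ) : Prop :=
  0 ≤ L ∧ 0 ≤ ε ∧
    ∀ z w s, ‖z‖ ≤ R → ‖w‖ ≤ R → ‖V z s - V w s‖ ≤ κ s * (L * ‖z - w‖ + ε)

def IsDominatedPath (κ : ℝ → ℝ) (T : ℝ) (x : E) (f : ℝ → E) : Prop :=
  f 0 = x ∧ ∀ t ∈ Icc 0 T, ∀ t' ∈ Icc 0 T, ‖f t - f t'‖ ≤ |∫ s in t'..t, κ s|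

namespace IsDominatedPath

theorem continuousOn (hκ : IntervalIntegrable κ volume 0 T) (hf : IsDominatedPath κ T x f) :
    ContinuousOn f (Icc 0 T) := by
  intro t₀ ht₀
  have hK : ContinuousWithinAt (fun t => ∫ s in t₀..t, κ s) (Icc 0 T) t₀ :=
    ((intervalIntegral.continuousOn_primitive_interval' hκ (Icc_subset_uIcc ht₀)).mono
      Icc_subset_uIcc) t₀ ht₀
  rw [ContinuousWithinAt, tendsto_iff_norm_sub_tendsto_zero]
  refine squeeze_zero' (Eventually.of_forall fun _ => norm_nonneg _) ?_
    (by simpa using hK.tendsto.abs)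
  filter_upwards [self_mem_nhdsWithin] with t ht
  exact hf.2 t ht t₀ ht₀

theorem norm_le (hκ0 : ∀ s, 0 ≤ κ s) (hκ : IntervalIntegrable κ volume 0 T)
    (hf : IsDominatedPath κ T x f) {t : ℝ} (ht : t ∈ Icc 0 T) :
    ‖f t‖ ≤ ‖x‖ + ∫ s in 0..T, κ s :=
  calc ‖f t‖ ≤ ‖f 0‖ + ‖f t - f 0‖ := norm_le_norm_add_norm_sub' _ _
    _ ≤ ‖x‖ + |∫ s in 0..t, κ s| := by
        gcongr
        · exact (congrArg norm hf.1).le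
        · exact hf.2 t ht 0 ⟨le_rfl, ht.1.trans ht.2⟩
    _ ≤ ‖x‖ + ∫ s in 0..T, κ s := by
        rw [abs_of_nonneg (intervalIntegral.integral_nonneg ht.1 fun s _ => hκ0 s)]
        gcongr
        exact intervalIntegral.integral_mono_interval le_rfl ht.1 ht.2 (ae_of_all _ hκ0) hκ

theorem of_tendsto (hT : 0 ≤ T) {F : ℕ → ℝ → E} (hF : ∀ n, IsDominatedPath κ T x (F n))
    (hlim : ∀ t ∈ Icc 0 T, Tendsto (fun n => F n t) atTop (𝓝 (f t))) :
    IsDominatedPath κ T x f := by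
  refine ⟨tendsto_nhds_unique (hlim 0 (left_mem_Icc.2 hT)) ?_, fun t ht t' ht' => ?_⟩
  · simp only [fun n => (hF n).1, tendsto_const_nhds]
  · exact le_of_tendsto ((hlim t ht).sub (hlim t' ht')).norm
      (Eventually.of_forall fun n => (hF n).2 t ht t' ht')

end IsDominatedPath

namespace IsDominatedCaratheodory

theorem nonneg (hV : IsDominatedCaratheodory V κ T) (s : ℝ) : 0 ≤ κ s :=
  (norm_nonneg _).trans (hV.norm_le 0 s)

theorem norm_le_of_isDominatedPath (hV : IsDominatedCaratheodory V κ T)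
    (hR : ‖x‖ + ∫ s in 0..T, κ s ≤ R) (hf : IsDominatedPath κ T x f) {t : ℝ}
    (ht : t ∈ Icc 0 T) : ‖f t‖ ≤ R :=
  (hf.norm_le hV.nonneg hV.intervalIntegrable ht).trans hR

theorem intervalIntegrable_comp (hV : IsDominatedCaratheodory V κ T) (hT : 0 ≤ T)
    (hf : ContinuousOn f (Icc 0 T)) : IntervalIntegrable (fun s => V (f s) s) volume 0 T := by
  have hκ := (intervalIntegrable_iff_integrableOn_Icc_of_le hT).1 hV.intervalIntegrable
  exact (intervalIntegrable_iff_integrableOn_Icc_of_le hT).2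
    (hκ.mono' (hV.aestronglyMeasurable_comp f hf) (ae_of_all _ fun s => hV.norm_le _ _))

end IsDominatedCaratheodory

variable [NormedSpace ℝ E]

noncomputable def picard (V : E → ℝ → E) (x : E) (f : ℝ → E) (t : ℝ) : E :=
  x + ∫ s in 0..t, V (f s) s

noncomputable def picardIter (V : E → ℝ → E) (x : E) (n : ℕ) : ℝ → E :=
  (picard V x)^[n] fun _ => x

theorem picardIter_succ (n : ℕ) : picardIter V x (n + 1) = picard V x (picardIter V x n) :=
  Function.iterate_succ_apply' _ _ _

theorem picard_congr (hT : 0 ≤ T) (h : EqOn f₁ f₂ (Icc 0 T)) {t : ℝ} (ht : t ∈ Icc 0 T) :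
    picard V x f₁ t = picard V x f₂ t := by
  rw [picard, picard, intervalIntegral.integral_congr fun s hs =>
    congrArg (V · s) (h (uIcc_subset_Icc (left_mem_Icc.2 hT) ht hs))]

namespace IsDominatedCaratheodory

theorem norm_picard_sub_le (hV : IsDominatedCaratheodory V κ T) (hT : 0 ≤ T)
    (hf : ContinuousOn f (Icc 0 T)) {t t' : ℝ} (ht : t ∈ Icc 0 T) (ht' : t' ∈ Icc 0 T) :
    ‖picard V x f t - picard V x f t'‖ ≤ |∫ s in t'..t, κ s| := by
  have h0 : (0:ℝ) ∈ Icc 0 T := left_mem_Icc.2 hT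
  have hVf := hV.intervalIntegrable_comp hT hf
  rw [picard, picard, add_sub_add_left_eq_sub,
    intervalIntegral.integral_interval_sub_left (hVf.mono_Icc h0 ht) (hVf.mono_Icc h0 ht')]
  exact intervalIntegral.norm_integral_le_abs_of_norm_le
    (ae_of_all _ fun s => hV.norm_le _ _) (hV.intervalIntegrable.mono_Icc ht' ht)

theorem isDominatedPath_picard (hV : IsDominatedCaratheodory V κ T) (hT : 0 ≤ T)
    (hf : ContinuousOn f (Icc 0 T)) : IsDominatedPath κ T x (picard V x f) :=
  ⟨by simp [picard], fun _ ht _ ht' => hV.norm_picard_sub_le hT hf ht ht'⟩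

theorem isDominatedPath_of_eq_picard (hV : IsDominatedCaratheodory V κ T) (hT : 0 ≤ T)
    (hf : ContinuousOn f (Icc 0 T)) (he : ∀ t ∈ Icc 0 T, f t = picard V x f t) :
    IsDominatedPath κ T x f := by
  obtain ⟨h0, hmod⟩ := hV.isDominatedPath_picard (x := x) hT hf
  refine ⟨(he 0 (left_mem_Icc.2 hT)).trans h0, fun t ht t' ht' => ?_⟩
  rw [he t ht, he t' ht']
  exact hmod t ht t' ht'

theorem isDominatedPath_picardIter (hV : IsDominatedCaratheodory V κ T) (hT : 0 ≤ T)
    (n : ℕ) : IsDominatedPath κ T x (picardIter V x n) := by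
  induction n with
  | zero => exact ⟨rfl, fun _ _ _ _ => by simp [picardIter]⟩
  | succ n ih =>
    rw [picardIter_succ]
    exact hV.isDominatedPath_picard hT (ih.continuousOn hV.intervalIntegrable)

theorem norm_picard_sub_picard_le (hV : IsDominatedCaratheodory V κ T) (hT : 0 ≤ T)
    {L ε : ℝ} (hLip : IsLipschitzUpTo V κ R L ε)
    (hf₁ : ContinuousOn f₁ (Icc 0 T)) (hf₂ : ContinuousOn f₂ (Icc 0 T))
    (hR₁ : ∀ s ∈ Icc 0 T, ‖f₁ s‖ ≤ R) (hR₂ : ∀ s ∈ Icc 0 T, ‖f₂ s‖ ≤ R)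
    {D : ℝ → ℝ} (hD : ∀ s ∈ Icc 0 T, ‖f₁ s - f₂ s‖ ≤ D s)
    (hκD : IntervalIntegrable (fun s => κ s * D s) volume 0 T) {t : ℝ} (ht : t ∈ Icc 0 T) :
    ‖picard V x f₁ t - picard V x f₂ t‖ ≤
      ε * (∫ s in 0..T, κ s) + L * ∫ s in 0..t, κ s * D s := by
  obtain ⟨hL, hε, hLip⟩ := hLip
  have h0 : (0:ℝ) ∈ Icc 0 T := left_mem_Icc.2 hT
  have hκt := hV.intervalIntegrable.mono_Icc h0 ht
  have hκDt := hκD.mono_Icc h0 ht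
  rw [picard, picard, add_sub_add_left_eq_sub, ← intervalIntegral.integral_sub
    ((hV.intervalIntegrable_comp hT hf₁).mono_Icc h0 ht)
    ((hV.intervalIntegrable_comp hT hf₂).mono_Icc h0 ht)]
  calc _ ≤ ∫ s in 0..t, (L * (κ s * D s) + ε * κ s) := by
        refine intervalIntegral.norm_integral_le_of_norm_le ht.1 (ae_of_all _ fun s hs => ?_)
          ((hκDt.const_mul L).add (hκt.const_mul ε))
        have hs' : s ∈ Icc 0 T := ⟨hs.1.le, hs.2.trans ht.2⟩
        calc ‖V (f₁ s) s - V (f₂ s) s‖ ≤ κ s * (L * ‖f₁ s - f₂ s‖ + ε) :=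
              hLip _ _ s (hR₁ s hs') (hR₂ s hs')
          _ ≤ κ s * (L * D s + ε) := by
              have := hV.nonneg s; have := hD s hs'; gcongr
          _ = L * (κ s * D s) + ε * κ s := by ring
    _ = ε * (∫ s in 0..t, κ s) + L * ∫ s in 0..t, κ s * D s := by
        rw [intervalIntegral.integral_add (hκDt.const_mul L) (hκt.const_mul ε),
          intervalIntegral.integral_const_mul, intervalIntegral.integral_const_mul, add_comm]
    _ ≤ _ := by
        gcongr
        exact intervalIntegral.integral_mono_interval le_rfl ht.1 ht.2 (ae_of_all _ hV.nonneg)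
          hV.intervalIntegrable

theorem tendsto_picard (hV : IsDominatedCaratheodory V κ T) (hT : 0 ≤ T) {F : ℕ → ℝ → E}
    (hF : ∀ n, ContinuousOn (F n) (Icc 0 T))
    (hlim : ∀ s ∈ Icc 0 T, Tendsto (fun n => F n s) atTop (𝓝 (f s))) {t : ℝ}
    (ht : t ∈ Icc 0 T) :
    Tendsto (fun n => picard V x (F n) t) atTop (𝓝 (picard V x f t)) := by
  have h0 : (0:ℝ) ∈ Icc 0 T := left_mem_Icc.2 hT
  have hsub : uIoc 0 t ⊆ Icc 0 T := uIoc_subset_uIcc.trans (uIcc_subset_Icc h0 ht)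
  exact tendsto_const_nhds.add
    (intervalIntegral.tendsto_integral_filter_of_dominated_convergence κ
      (Eventually.of_forall fun n =>
        ((hV.intervalIntegrable_comp hT (hF n)).mono_Icc h0 ht).def'.aestronglyMeasurable)
      (Eventually.of_forall fun n => ae_of_all _ fun s _ => hV.norm_le _ _)
      (hV.intervalIntegrable.mono_Icc h0 ht)
      (ae_of_all _ fun s hs => ((hV.continuous_state s).tendsto _).comp (hlim s (hsub hs))))

theorem dist_picardIter_le (hV : IsDominatedCaratheodory V κ T) (hT : 0 ≤ T)
    (hR : ‖x‖ + ∫ s in 0..T, κ s ≤ R) {s : ℝ} (hs : s ∈ Icc 0 T) (m k : ℕ) :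
    dist (picardIter V x m s) (picardIter V x k s) ≤ 2 * R := by
  have hm := hV.norm_le_of_isDominatedPath hR (hV.isDominatedPath_picardIter hT m) hs
  have hk := hV.norm_le_of_isDominatedPath hR (hV.isDominatedPath_picardIter hT k) hs
  rw [dist_eq_norm]
  linarith [norm_sub_le (picardIter V x m s) (picardIter V x k s)]

theorem aemeasurable_tailDiam_picardIter (hV : IsDominatedCaratheodory V κ T) (hT : 0 ≤ T)
    (n : ℕ) : AEMeasurable (fun s => tailDiam (fun m => picardIter V x m s) n)
      (volume.restrict (Icc 0 T)) :=
  aemeasurable_tailDiam fun m k => (continuous_dist.comp_continuousOn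
    (((hV.isDominatedPath_picardIter hT m).continuousOn hV.intervalIntegrable).prodMk
      ((hV.isDominatedPath_picardIter hT k).continuousOn hV.intervalIntegrable))).aemeasurable
    measurableSet_Icc

theorem tailDiam_picardIter_succ_le (hV : IsDominatedCaratheodory V κ T) (hT : 0 ≤ T)
    (hR : ‖x‖ + ∫ s in 0..T, κ s ≤ R) {L ε : ℝ} (hLip : IsLipschitzUpTo V κ R L ε) (n : ℕ)
    {t : ℝ} (ht : t ∈ Icc 0 T) :
    tailDiam (fun m => picardIter V x m t) (n + 1) ≤
      ε * (∫ s in 0..T, κ s) + L * ∫ s in 0..t, κ s * tailDiam (fun m => picardIter V x m s) n := by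
  have hF := hV.isDominatedPath_picardIter (x := x) hT
  have hFc : ∀ m, ContinuousOn (picardIter V x m) (Icc 0 T) := fun m =>
    (hF m).continuousOn hV.intervalIntegrable
  have hFR : ∀ m, ∀ s ∈ Icc 0 T, ‖picardIter V x m s‖ ≤ R := fun m _ hs =>
    hV.norm_le_of_isDominatedPath hR (hF m) hs
  have hdist := fun s (hs : s ∈ Icc 0 T) => hV.dist_picardIter_le hT hR hs
  refine ciSup_le fun p => ?_
  dsimp only
  rw [add_right_comm n 1, add_right_comm n 1, picardIter_succ, picardIter_succ, dist_eq_norm]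
  refine hV.norm_picard_sub_picard_le hT hLip (hFc _) (hFc _) (hFR _) (hFR _)
    (fun s hs => by rw [← dist_eq_norm]; exact dist_le_tailDiam (hdist s hs) _ _) ?_ ht
  refine hV.intervalIntegrable.mul_of_norm_le (B := 2 * R) hT
    (hV.aemeasurable_tailDiam_picardIter hT n).aestronglyMeasurable fun s hs => ?_
  rw [Real.norm_of_nonneg tailDiam_nonneg]
  exact tailDiam_le (hdist s hs)

variable {Q : ℝ} {ι : Type*} {l : Filter ι} [l.NeBot] {L ε : ι → ℝ}

theorem tendsto_tailDiam_picardIter (hV : IsDominatedCaratheodory V κ T) (hT : 0 ≤ T)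
    (hR : ‖x‖ + ∫ s in 0..T, κ s ≤ R) (hQ : 0 < Q)
    (hLip : ∀ᶠ j in l, IsLipschitzUpTo V κ R (L j) (ε j))
    (hsmall : Tendsto (fun j => ε j * Real.exp (2 * L j * Q)) l (𝓝 0)) {t : ℝ}
    (ht : t ∈ Icc 0 T) : Tendsto (tailDiam fun m => picardIter V x m t) atTop (𝓝 0) := by
  set ψ := fun n s => tailDiam (fun m => picardIter V x m s) n
  have hdist := fun s (hs : s ∈ Icc 0 T) => hV.dist_picardIter_le hT hR hs
  have hbdd : ∀ s, BddBelow (range fun n => ψ n s) := fun s =>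
    ⟨0, by rintro _ ⟨n, rfl⟩; exact tailDiam_nonneg⟩
  have hψm := hV.aemeasurable_tailDiam_picardIter (x := x) hT
  have hφ : EqOn (fun s => ⨅ n, ψ n s) 0 (Icc 0 T) := by
    refine eqOn_zero_of_le_add_integral (a := fun j => ε j * ∫ s in 0..T, κ s) hV.nonneg
      hV.intervalIntegrable ?_ (fun s => Real.iInf_nonneg fun n => tailDiam_nonneg) hQ ?_
      (by simpa [mul_right_comm] using hsmall.mul_const (∫ s in 0..T, κ s))
    · refine hV.intervalIntegrable.mul_of_norm_le (B := 2 * R) hT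
        (AEMeasurable.iInf hψm).aestronglyMeasurable fun s hs => ?_
      rw [Real.norm_of_nonneg (Real.iInf_nonneg fun n => tailDiam_nonneg)]
      exact (ciInf_le (hbdd s) 0).trans (tailDiam_le (hdist s hs))
    · filter_upwards [hLip] with j hj
      exact ⟨hj.1, iInf_le_add_integral (ψ := ψ) hV.nonneg hV.intervalIntegrable
        (fun n => (hψm n).aestronglyMeasurable) (fun n s => tailDiam_nonneg)
        (fun n s hs => tailDiam_le (hdist s hs)) (fun n s hs => tailDiam_succ_le (hdist s hs))
        fun n t ht => hV.tailDiam_picardIter_succ_le hT hR hj n ht⟩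
  convert tendsto_atTop_ciInf
    (antitone_nat_of_succ_le fun n => tailDiam_succ_le (hdist t ht)) (hbdd t) using 2
  exact (hφ ht).symm

theorem exists_eq_picard [CompleteSpace E] (hV : IsDominatedCaratheodory V κ T) (hT : 0 ≤ T)
    (hR : ‖x‖ + ∫ s in 0..T, κ s ≤ R) (hQ : 0 < Q)
    (hLip : ∀ᶠ j in l, IsLipschitzUpTo V κ R (L j) (ε j))
    (hsmall : Tendsto (fun j => ε j * Real.exp (2 * L j * Q)) l (𝓝 0)) :
    ∃ f : ℝ → E, ContinuousOn f (Icc 0 T) ∧ ∀ t ∈ Icc 0 T, f t = picard V x f t := by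
  have hF := hV.isDominatedPath_picardIter (x := x) hT
  have hlim : ∀ t ∈ Icc 0 T, Tendsto (fun n => picardIter V x n t) atTop
      (𝓝 (limUnder atTop fun n => picardIter V x n t)) := fun t ht =>
    (cauchySeq_of_tendsto_tailDiam (hV.dist_picardIter_le hT hR ht)
      (hV.tendsto_tailDiam_picardIter hT hR hQ hLip hsmall ht)).tendsto_limUnder
  have hf := IsDominatedPath.of_tendsto hT hF hlim
  refine ⟨_, hf.continuousOn hV.intervalIntegrable, fun t ht =>
    tendsto_nhds_unique (hlim t ht) ((tendsto_add_atTop_iff_nat 1).1 ?_)⟩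
  simp only [picardIter_succ]
  exact hV.tendsto_picard hT (fun n => (hF n).continuousOn hV.intervalIntegrable) hlim ht

theorem eqOn_of_eq_picard (hV : IsDominatedCaratheodory V κ T) (hT : 0 ≤ T)
    (hR : ‖x‖ + ∫ s in 0..T, κ s ≤ R) (hQ : 0 < Q)
    (hLip : ∀ᶠ j in l, IsLipschitzUpTo V κ R (L j) (ε j))
    (hsmall : Tendsto (fun j => ε j * Real.exp (2 * L j * Q)) l (𝓝 0))
    (hf₁ : ContinuousOn f₁ (Icc 0 T)) (he₁ : ∀ t ∈ Icc 0 T, f₁ t = picard V x f₁ t)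
    (hf₂ : ContinuousOn f₂ (Icc 0 T)) (he₂ : ∀ t ∈ Icc 0 T, f₂ t = picard V x f₂ t) :
    EqOn f₁ f₂ (Icc 0 T) := by
  have hR₁ : ∀ s ∈ Icc 0 T, ‖f₁ s‖ ≤ R := fun _ hs =>
    hV.norm_le_of_isDominatedPath hR (hV.isDominatedPath_of_eq_picard hT hf₁ he₁) hs
  have hR₂ : ∀ s ∈ Icc 0 T, ‖f₂ s‖ ≤ R := fun _ hs =>
    hV.norm_le_of_isDominatedPath hR (hV.isDominatedPath_of_eq_picard hT hf₂ he₂) hs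
  have hκφ : IntervalIntegrable (fun s => κ s * ‖f₁ s - f₂ s‖) volume 0 T :=
    hV.intervalIntegrable.mul_continuousOn (by rw [uIcc_of_le hT]; exact (hf₁.sub hf₂).norm)
  have hzero := eqOn_zero_of_le_add_integral (a := fun j => ε j * ∫ s in 0..T, κ s) hV.nonneg
    hV.intervalIntegrable hκφ (fun s => norm_nonneg _) hQ ?_
    (by simpa [mul_right_comm] using hsmall.mul_const (∫ s in 0..T, κ s))
  · intro t ht
    simpa [sub_eq_zero] using hzero ht
  · filter_upwards [hLip] with j hj
    refine ⟨hj.1, fun t ht => ?_⟩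
    have := hV.norm_picard_sub_picard_le (x := x) hT hj hf₁ hf₂ hR₁ hR₂ (fun s _ => le_rfl)
      hκφ ht
    rwa [← he₁ t ht, ← he₂ t ht] at this

theorem existsUnique_continuousMap [CompleteSpace E] (hV : IsDominatedCaratheodory V κ T)
    (hT : 0 ≤ T) (hR : ‖x‖ + ∫ s in 0..T, κ s ≤ R) (hQ : 0 < Q)
    (hLip : ∀ᶠ j in l, IsLipschitzUpTo V κ R (L j) (ε j))
    (hsmall : Tendsto (fun j => ε j * Real.exp (2 * L j * Q)) l (𝓝 0)) :
    ∃! X : C(Icc 0 T, E), ∀ t : Icc 0 T,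
      X t = x + ∫ s in 0..(t : ℝ), V (X (projIcc 0 T hT s)) s := by
  obtain ⟨f, hfc, hfe⟩ := hV.exists_eq_picard hT hR hQ hLip hsmall
  have hext : ∀ (X : C(Icc 0 T, E)) (t : Icc 0 T),
      x + ∫ s in 0..(t : ℝ), V (X (projIcc 0 T hT s)) s = picard V x (IccExtend hT X) t :=
    fun _ _ => rfl
  refine ⟨⟨fun t => f t, hfc.domRestrict⟩, fun t => ?_, fun Y hY => ?_⟩
  · rw [hext, picard_congr hT (fun s hs => IccExtend_of_mem hT _ hs) t.2]
    exact hfe t t.2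
  · have hYe : ∀ s ∈ Icc 0 T, IccExtend hT Y s = picard V x (IccExtend hT Y) s :=
      fun s hs => by rw [IccExtend_of_mem hT _ hs, hY, hext]
    ext t
    exact (IccExtend_val hT Y t).symm.trans (hV.eqOn_of_eq_picard hT hR hQ hLip hsmall
      Y.continuous.Icc_extend'.continuousOn hYe hfc hfe t.2)

end IsDominatedCaratheodory

end IntegralEquation

section Skeleton

variable {d m : ℕ}

theorem mulVecE_sub (A B : Matrix (Fin d) (Fin m) ℝ) (v : EuclideanSpace ℝ (Fin m)) :
    mulVecE (A - B) v = mulVecE A v - mulVecE B v := by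
  ext i
  simp [mulVecE, sub_mul, Finset.sum_sub_distrib]

theorem norm_mulVecE_le (A : Matrix (Fin d) (Fin m) ℝ) (v : EuclideanSpace ℝ (Fin m)) :
    ‖mulVecE A v‖ ≤ frobNorm A * ‖v‖ := by
  rw [EuclideanSpace.norm_eq, EuclideanSpace.norm_eq, frobNorm, ← Real.sqrt_mul (by positivity)]
  refine Real.sqrt_le_sqrt ?_
  simp only [mulVecE, PiLp.toLp_apply, Real.norm_eq_abs, sq_abs]
  rw [Finset.sum_mul]
  exact Finset.sum_le_sum fun i _ => Finset.sum_mul_sq_le_sq_mul_sq _ _ _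

theorem continuous_mulVecE :
    Continuous fun p : Matrix (Fin d) (Fin m) ℝ × EuclideanSpace ℝ (Fin m) =>
      mulVecE p.1 p.2 := by
  unfold mulVecE
  fun_prop

noncomputable def skeletonField (σ : EuclideanSpace ℝ (Fin d) → Matrix (Fin d) (Fin m) ℝ)
    (b : EuclideanSpace ℝ (Fin d) → EuclideanSpace ℝ (Fin d))
    (g : ℝ → EuclideanSpace ℝ (Fin m)) (z : EuclideanSpace ℝ (Fin d)) (s : ℝ) :
    EuclideanSpace ℝ (Fin d) :=
  mulVecE (σ z) (g s) + b z

variable {σ : EuclideanSpace ℝ (Fin d) → Matrix (Fin d) (Fin m) ℝ}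
  {b : EuclideanSpace ℝ (Fin d) → EuclideanSpace ℝ (Fin d)}
  {g : ℝ → EuclideanSpace ℝ (Fin m)} {M : ℝ}

theorem isDominatedCaratheodory_skeletonField {T : ℝ} (hσc : Continuous σ) (hbc : Continuous b)
    (hσbd : ∀ z, frobNorm (σ z) ≤ M) (hbbd : ∀ z, ‖b z‖ ≤ M) (hgm : Measurable g)
    (hgi : IntervalIntegrable (fun s => ‖g s‖ ^ 2) volume 0 T) :
    IsDominatedCaratheodory (skeletonField σ b g) (fun s => (M + 1) * (‖g s‖ + 1)) T where
  continuous_state _ := (continuous_mulVecE.comp (hσc.prodMk continuous_const)).add hbc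
  aestronglyMeasurable_comp _ hf :=
    (Continuous.comp_aestronglyMeasurable₂ (g := fun z v => mulVecE (σ z) v)
      (continuous_mulVecE.comp ((hσc.comp continuous_fst).prodMk continuous_snd))
      (hf.aestronglyMeasurable measurableSet_Icc) hgm.aestronglyMeasurable).add
    ((hbc.comp_continuousOn hf).aestronglyMeasurable measurableSet_Icc)
  norm_le z s :=
    calc ‖mulVecE (σ z) (g s) + b z‖ ≤ frobNorm (σ z) * ‖g s‖ + ‖b z‖ :=
          (norm_add_le _ _).trans (add_le_add_left (norm_mulVecE_le _ _) _)
      _ ≤ M * ‖g s‖ + M := by gcongr; exacts [hσbd z, hbbd z]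
      _ ≤ (M + 1) * (‖g s‖ + 1) := by nlinarith [norm_nonneg (g s)]
  intervalIntegrable := by
    refine IntervalIntegrable.const_mul ?_ _
    refine (hgi.add (intervalIntegrable_const (c := 2))).mono_fun
      (hgm.norm.add_const 1).aestronglyMeasurable (ae_of_all _ fun s => ?_)
    simp only [Real.norm_eq_abs]
    rw [abs_of_nonneg (by positivity), abs_of_nonneg (by positivity)]
    nlinarith [sq_nonneg (‖g s‖ - 1)]

theorem isLipschitzUpTo_skeletonField {C μ R N : ℝ} (hM : 0 ≤ M) (hC : 0 < C)
    (hH1 : HypH1 σ b C μ) (hN : Real.exp 1 < N) (hRN : R ≤ N) :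
    IsLipschitzUpTo (skeletonField σ b g) (fun s => (M + 1) * (‖g s‖ + 1)) R
      (C * Real.log N) (C * Real.log N / N ^ μ) := by
  have hN0 : 0 < N := (Real.exp_pos 1).trans hN
  have hlog : 1 ≤ Real.log N := ((Real.lt_log_iff_exp_lt hN0).2 hN).le
  have hL : 0 ≤ C * Real.log N := mul_nonneg hC.le (by linarith)
  have hε : 0 ≤ C * Real.log N / N ^ μ := div_nonneg hL (Real.rpow_nonneg hN0.le μ)
  refine ⟨hL, hε, fun z w s hz hw => ?_⟩
  obtain ⟨hσ, hb⟩ := hH1 N hN z w (hz.trans hRN) (hw.trans hRN)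
  have hsqrt : Real.sqrt (Real.log N) ≤ Real.log N := Real.sqrt_le_self_iff.2 (Or.inr hlog)
  have hB : 0 ≤ C * Real.log N * ‖z - w‖ + C * Real.log N / N ^ μ :=
    add_nonneg (mul_nonneg hL (norm_nonneg _)) hε
  calc ‖skeletonField σ b g z s - skeletonField σ b g w s‖
        = ‖mulVecE (σ z - σ w) (g s) + (b z - b w)‖ := by
          rw [skeletonField, skeletonField, mulVecE_sub, add_sub_add_comm]
    _ ≤ frobNorm (σ z - σ w) * ‖g s‖ + ‖b z - b w‖ :=
          (norm_add_le _ _).trans (add_le_add_left (norm_mulVecE_le _ _) _)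
    _ ≤ (C * Real.log N * ‖z - w‖ + C * Real.log N / N ^ μ) * ‖g s‖ +
          (C * Real.log N * ‖z - w‖ + C * Real.log N / N ^ μ) := by
          gcongr
          refine hσ.trans ?_
          gcongr
    _ ≤ (M + 1) * (‖g s‖ + 1) * (C * Real.log N * ‖z - w‖ + C * Real.log N / N ^ μ) := by
          nlinarith [norm_nonneg (g s), mul_nonneg hM (mul_nonneg (norm_nonneg (g s)) hB)]

theorem tendsto_mul_log_div_rpow_mul_exp {C μ : ℝ} (hC : 0 < C) (hμ : 0 < μ) :
    Tendsto (fun N => C * Real.log N / N ^ μ * Real.exp (2 * (C * Real.log N) * (μ / (4 * C))))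
      atTop (𝓝 0) := by
  have h := ((isLittleO_log_rpow_atTop (half_pos hμ)).tendsto_div_nhds_zero).const_mul C
  rw [mul_zero] at h
  refine h.congr' ((eventually_gt_atTop 0).mono fun N hN => ?_)
  have hexp : Real.exp (2 * (C * Real.log N) * (μ / (4 * C))) = N ^ (μ / 2) := by
    rw [Real.rpow_def_of_pos hN]
    congr 1
    field_simp
    ring
  have hpow : N ^ μ = N ^ (μ / 2) * N ^ (μ / 2) := by rw [← Real.rpow_add hN]; ring_nf
  have : 0 < N ^ (μ / 2) := Real.rpow_pos_of_pos hN _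
  dsimp only
  rw [hexp, hpow]
  field_simp

end Skeleton

/-- Existence and uniqueness of the solution of the controlled (skeleton) ODE
`X(t) = x + ∫₀ᵗ (σ(X(s))·g(s) + b(X(s))) ds` on `[0, T]`, for bounded continuous
coefficients satisfying hypothesis (H1) and a measurable control derivative `g`
with finite energy `∫₀ᵀ |g|² < ∞`. -/
theorem skeleton_ODE_exists_unique (d m : ℕ)
    (σ : EuclideanSpace ℝ (Fin d) → Matrix (Fin d) (Fin m) ℝ)
    (b : EuclideanSpace ℝ (Fin d) → EuclideanSpace ℝ (Fin d))
    (hσc : Continuous σ) (hbc : Continuous b)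
    (M : ℝ) (hσbd : ∀ z, frobNorm (σ z) ≤ M) (hbbd : ∀ z, ‖b z‖ ≤ M)
    (C μ : ℝ) (hC : 0 < C) (hμ : 0 < μ) (hH1 : HypH1 σ b C μ)
    (T : ℝ) (hT : 0 < T) (x : EuclideanSpace ℝ (Fin d))
    (g : ℝ → EuclideanSpace ℝ (Fin m)) (hgm : Measurable g)
    (hgi : IntervalIntegrable (fun s => ‖g s‖ ^ 2) MeasureTheory.volume 0 T) :
    ∃! X : C(Set.Icc (0:ℝ) T, EuclideanSpace ℝ (Fin d)),
      ∀ t : Set.Icc (0:ℝ) T,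
        X t = x + ∫ s in (0:ℝ)..(t : ℝ),
          (mulVecE (σ (X (Set.projIcc 0 T hT.le s))) (g s)
            + b (X (Set.projIcc 0 T hT.le s))) := by
  have hM : 0 ≤ M := (norm_nonneg _).trans (hbbd x)
  exact (isDominatedCaratheodory_skeletonField hσc hbc hσbd hbbd hgm hgi).existsUnique_continuousMap
    hT.le le_rfl (Q := μ / (4 * C)) (by positivity)
    (((eventually_gt_atTop (Real.exp 1)).and (eventually_ge_atTop _)).mono fun N hN =>
      isLipschitzUpTo_skeletonField hM hC hH1 hN.1 hN.2)
    (tendsto_mul_log_div_rpow_mul_exp hC hμ)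
end
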